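/- arXiv:2006.10638 — 6 statements merged into one kernel-verified Lean document; each statement's English description precedes it below -/
import Mathlib

section
/- For every positive integer x, the factorial satisfies √(2π)·x^(x+1/2)·e^(−x)·e^(1/(12x+1)) < x! < √(2π)·x^(x+1/2)·e^(−x)·e^(1/(12x)). -/
open Real

open Filter Topology

/-!
Robbins' argument. With `s n = n! / (√(2n) (n/e)^n)` (Mathlib's `Stirling.stirlingSeq`) and
`r = (2n+1)⁻²`, the step `log s n - log s (n+1)` equals `∑_{k ≥ 1} r^k / (2k+1)`. Bounding the
terms by `r^k / 3` gives a geometric series summing to `1/(12n) - 1/(12(n+1))`, while the first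
term `r/3` alone exceeds `1/(12n+1) - 1/(12(n+1)+1)`. Hence `log s n - 1/(12n)` increases and
`log s n - 1/(12n+1)` decreases strictly, both towards the limit `log √π`.
-/

theorem StrictMono.lt_of_tendsto {α : Type*} [TopologicalSpace α] [Preorder α]
    [OrderClosedTopology α] {f : ℕ → α} {a : α} (hf : StrictMono f)
    (ha : Tendsto f atTop (𝓝 a)) (n : ℕ) : f n < a :=
  (hf n.lt_succ_self).trans_le (hf.monotone.ge_of_tendsto ha _)

theorem StrictAnti.lt_of_tendsto {α : Type*} [TopologicalSpace α] [Preorder α]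
    [OrderClosedTopology α] {f : ℕ → α} {a : α} (hf : StrictAnti f)
    (ha : Tendsto f atTop (𝓝 a)) (n : ℕ) : a < f n :=
  (hf.antitone.le_of_tendsto ha _).trans_lt (hf n.lt_succ_self)

theorem tendsto_one_div_mul_add_one_add_nhds_zero {a : ℝ} (ha : 0 < a) (b : ℝ) :
    Tendsto (fun n : ℕ => 1 / (a * ((n : ℝ) + 1) + b)) atTop (𝓝 0) :=
  tendsto_const_nhds.div_atTop <| tendsto_atTop_add_const_right _ b <|
    (tendsto_atTop_add_const_right _ 1 tendsto_natCast_atTop_atTop).const_mul_atTop ha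

namespace Stirling

theorem tendsto_log_stirlingSeq_succ :
    Tendsto (fun n : ℕ => log (stirlingSeq (n + 1))) atTop (𝓝 (log √π)) :=
  ((continuousAt_log (by positivity)).tendsto.comp tendsto_stirlingSeq_sqrt_pi).comp
    (tendsto_add_atTop_nat 1)

theorem log_stirlingSeq_succ_sdiff_lt (n : ℕ) :
    log (stirlingSeq (n + 1)) - log (stirlingSeq (n + 2)) <
      1 / (12 * ((n : ℝ) + 1)) - 1 / (12 * ((n : ℝ) + 2)) := by
  set r : ℝ := (1 / (2 * ↑(n + 1) + 1)) ^ 2 with hr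
  have hr0 : 0 < r := by positivity
  have hr1 : r < 1 := by
    rw [hr, div_pow, one_pow, div_lt_one (by positivity)]
    push_cast; nlinarith [n.cast_nonneg (α := ℝ)]
  have hgeom : HasSum (fun k : ℕ => r ^ (k + 1) / 3) (r / (3 * (1 - r))) := by
    rw [show r / (3 * (1 - r)) = r * (1 - r)⁻¹ / 3 by field_simp]
    simpa only [pow_succ'] using ((hasSum_geometric_of_lt_one hr0.le hr1).mul_left r).div_const 3
  have hle (k : ℕ) : 1 / (2 * ↑(k + 1) + 1) * r ^ (k + 1) ≤ r ^ (k + 1) / 3 := by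
    rw [div_mul_eq_mul_div, one_mul]
    gcongr
    push_cast; linarith [k.cast_nonneg (α := ℝ)]
  have hlt := hasSum_lt (i := 1) hle (by rw [div_mul_eq_mul_div, one_mul]; gcongr; norm_num)
    (log_stirlingSeq_sdiff_hasSum n) hgeom
  refine hlt.trans_eq ?_
  rw [div_sub_div _ _ (by positivity) (by positivity),
    div_eq_div_iff (by linarith) (by positivity), hr]
  push_cast
  field_simp
  ring

theorem lt_log_stirlingSeq_succ_sdiff (n : ℕ) :
    1 / (12 * ((n : ℝ) + 1) + 1) - 1 / (12 * ((n : ℝ) + 2) + 1) <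
      log (stirlingSeq (n + 1)) - log (stirlingSeq (n + 2)) := by
  have hsum := sum_le_hasSum (Finset.range 2) (fun k _ => by positivity)
    (log_stirlingSeq_sdiff_hasSum n)
  refine lt_of_lt_of_le ?_ hsum
  simp only [Finset.sum_range_succ]
  push_cast
  rw [div_sub_div _ _ (by positivity) (by positivity), div_lt_iff₀ (by positivity)]
  field_simp
  nlinarith

theorem stirlingSeq_lt_sqrt_pi_mul_exp {n : ℕ} (hn : n ≠ 0) :
    stirlingSeq n < √π * exp (1 / (12 * (n : ℝ))) := by
  obtain ⟨n, rfl⟩ := Nat.exists_eq_add_one_of_ne_zero hn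
  have hmono : StrictMono fun k : ℕ => log (stirlingSeq (k + 1)) - 1 / (12 * ((k : ℝ) + 1)) :=
    strictMono_nat_of_lt_succ fun k => by
      have := log_stirlingSeq_succ_sdiff_lt k
      push_cast; ring_nf at this ⊢; linarith
  have hlim := tendsto_log_stirlingSeq_succ.sub
    (by simpa only [add_zero] using
      tendsto_one_div_mul_add_one_add_nhds_zero (by norm_num : (0 : ℝ) < 12) 0)
  rw [sub_zero] at hlim
  have := hmono.lt_of_tendsto hlim n
  push_cast
  rw [← exp_log (show 0 < √π by positivity), ← exp_add, ← log_lt_iff_lt_exp (stirlingSeq'_pos n)]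
  linarith

theorem sqrt_pi_mul_exp_lt_stirlingSeq {n : ℕ} (hn : n ≠ 0) :
    √π * exp (1 / (12 * (n : ℝ) + 1)) < stirlingSeq n := by
  obtain ⟨n, rfl⟩ := Nat.exists_eq_add_one_of_ne_zero hn
  have hanti : StrictAnti fun k : ℕ => log (stirlingSeq (k + 1)) - 1 / (12 * ((k : ℝ) + 1) + 1) :=
    strictAnti_nat_of_succ_lt fun k => by
      have := lt_log_stirlingSeq_succ_sdiff k
      push_cast; ring_nf at this ⊢; linarith
  have hlim := tendsto_log_stirlingSeq_succ.sub
    (tendsto_one_div_mul_add_one_add_nhds_zero (by norm_num : (0 : ℝ) < 12) 1)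
  rw [sub_zero] at hlim
  have := hanti.lt_of_tendsto hlim n
  push_cast
  rw [← exp_log (show 0 < √π by positivity), ← exp_add, ← lt_log_iff_exp_lt (stirlingSeq'_pos n)]
  linarith

theorem factorial_eq_stirlingSeq_mul {n : ℕ} (hn : n ≠ 0) :
    (n.factorial : ℝ) = stirlingSeq n * (√(2 * n) * (n / exp 1) ^ n) := by
  rw [stirlingSeq, div_mul_cancel₀]
  positivity

end Stirling

theorem sqrt_two_pi_mul_rpow_mul_exp_neg (n : ℕ) :
    √(2 * π) * (n : ℝ) ^ ((n : ℝ) + 1 / 2) * exp (-(n : ℝ)) =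
      √π * (√(2 * n) * (n / exp 1) ^ n) := by
  rw [rpow_add' n.cast_nonneg (by positivity), rpow_natCast, ← sqrt_eq_rpow, div_pow,
    ← exp_nat_mul, mul_one, exp_neg, sqrt_mul' 2 pi_pos.le, sqrt_mul' 2 n.cast_nonneg]
  ring

theorem stirling_two_sided (x : ℕ) (hx : 0 < x) :
    Real.sqrt (2 * π) * (x : ℝ) ^ ((x : ℝ) + 1/2) * Real.exp (-(x : ℝ)) *
      Real.exp (1 / (12 * (x : ℝ) + 1)) < (Nat.factorial x : ℝ) ∧
    (Nat.factorial x : ℝ) <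
      Real.sqrt (2 * π) * (x : ℝ) ^ ((x : ℝ) + 1/2) * Real.exp (-(x : ℝ)) *
        Real.exp (1 / (12 * (x : ℝ))) := by
  have hscale : 0 < √(2 * x) * (x / exp 1) ^ x := by positivity
  rw [sqrt_two_pi_mul_rpow_mul_exp_neg, Stirling.factorial_eq_stirlingSeq_mul hx.ne',
    mul_right_comm, mul_right_comm _ _ (exp _)]
  exact ⟨mul_lt_mul_of_pos_right (Stirling.sqrt_pi_mul_exp_lt_stirlingSeq hx.ne') hscale,
    mul_lt_mul_of_pos_right (Stirling.stirlingSeq_lt_sqrt_pi_mul_exp hx.ne') hscale⟩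
end

section
/- For every integer n ≥ 9, the following inequality holds: C(n,3)·C(n−3,3) · (1/C(n−1,2))^6 · (C(n−7,2)/C(n−1,2))^{n−6} ≤ (16 n^4 / (9 (n−2)^{10})) · (1 − 6/(n−1))^{2n−12}. -/
lemma c2n (k : ℕ) : 2 * (k + 2).choose 2 = (k + 1) * (k + 2) := by
  induction k with
  | zero => decide
  | succ k ih =>
    rw [show k + 1 + 2 = (k + 2) + 1 from rfl, Nat.choose_succ_succ, Nat.choose_one_right]
    nlinarith [ih]

lemma c3n (k : ℕ) : 6 * (k + 3).choose 3 = (k + 1) * (k + 2) * (k + 3) := by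
  induction k with
  | zero => decide
  | succ k ih =>
    rw [show k + 1 + 3 = (k + 3) + 1 from rfl, Nat.choose_succ_succ]
    have h2 := c2n (k + 1)
    nlinarith [ih, h2]

lemma choose2R (k : ℕ) : (((k + 2).choose 2 : ℕ) : ℝ) = ((k : ℝ) + 1) * ((k : ℝ) + 2) / 2 := by
  rw [eq_div_iff (two_ne_zero), mul_comm]
  exact_mod_cast c2n k

lemma choose3R (k : ℕ) : (((k + 3).choose 3 : ℕ) : ℝ) =
    ((k : ℝ) + 1) * ((k : ℝ) + 2) * ((k : ℝ) + 3) / 6 := by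
  rw [eq_div_iff (by norm_num : (6:ℝ) ≠ 0), mul_comm]
  exact_mod_cast c3n k

theorem isolated_triangle_pairs_upper (n : ℕ) (hn : 9 ≤ n) :
    (n.choose 3 : ℝ) * ((n - 3).choose 3 : ℝ) * (1 / ((n - 1).choose 2 : ℝ)) ^ 6 *
        (((n - 7).choose 2 : ℝ) / ((n - 1).choose 2 : ℝ)) ^ (n - 6) ≤
      (16 * (n : ℝ) ^ 4 / (9 * ((n : ℝ) - 2) ^ 10)) * (1 - 6 / ((n : ℝ) - 1)) ^ (2 * n - 12) := by
  obtain ⟨m, rfl⟩ : ∃ m, n = m + 9 := ⟨n - 9, by omega⟩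
  have e1 : m + 9 - 3 = (m + 3) + 3 := by omega
  have e2 : m + 9 - 1 = (m + 6) + 2 := by omega
  have e3 : m + 9 - 7 = m + 2 := by omega
  have e4 : m + 9 - 6 = m + 3 := by omega
  have e5 : 2 * (m + 9) - 12 = 2 * (m + 3) := by omega
  have e6 : m + 9 = (m + 6) + 3 := by omega
  rw [e1, e2, e3, e4, e5, e6, choose3R (m + 6), choose3R (m + 3), choose2R (m + 6),
    choose2R m]
  set x : ℝ := (m : ℝ) with hxdef
  have hx : (0 : ℝ) ≤ x := Nat.cast_nonneg m
  push_cast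
  have h8 : (0 : ℝ) < x + 8 := by linarith
  have h7 : (0 : ℝ) < x + 7 := by linarith
  have hsub : (1 : ℝ) - 6 / (x + 6 + 3 - 1) = (x + 2) / (x + 8) := by
    rw [show x + 6 + 3 - 1 = x + 8 by ring]
    field_simp
    ring
  rw [hsub, pow_mul]
  have hBase : (x + 1) * (x + 2) / 2 / ((x + 6 + 1) * (x + 6 + 2) / 2) ≤
      ((x + 2) / (x + 8)) ^ 2 := by
    rw [div_pow, show x + 6 + 1 = x + 7 by ring, show x + 6 + 2 = x + 8 by ring,
      div_le_div_iff₀ (by positivity) (by positivity)]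
    nlinarith [hx, mul_nonneg hx hx]
  have hPref : (x + 6 + 1) * (x + 6 + 2) * (x + 6 + 3) / 6 *
        ((x + 3 + 1) * (x + 3 + 2) * (x + 3 + 3) / 6) *
        (1 / ((x + 6 + 1) * (x + 6 + 2) / 2)) ^ 6 ≤
      16 * (x + 6 + 3) ^ 4 / (9 * (x + 6 + 3 - 2) ^ 10) := by
    have key : (x + 4) * (x + 5) * (x + 6) * (x + 7) ^ 5 ≤ (x + 9) ^ 3 * (x + 8) ^ 5 := by
      have k1 : (x + 4) * (x + 5) * (x + 6) ≤ (x + 9) ^ 3 := by nlinarith [hx, mul_nonneg hx hx]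
      have k2 : (x + 7) ^ 5 ≤ (x + 8) ^ 5 := by
        apply pow_le_pow_left₀ (by linarith) (by linarith)
      calc (x + 4) * (x + 5) * (x + 6) * (x + 7) ^ 5
          ≤ (x + 9) ^ 3 * (x + 7) ^ 5 := by
            apply mul_le_mul_of_nonneg_right k1 (by positivity)
        _ ≤ (x + 9) ^ 3 * (x + 8) ^ 5 := by
            apply mul_le_mul_of_nonneg_left k2 (by positivity)
    have hA : (x + 6 + 1) * (x + 6 + 2) * (x + 6 + 3) / 6 *
          ((x + 3 + 1) * (x + 3 + 2) * (x + 3 + 3) / 6) *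
          (1 / ((x + 6 + 1) * (x + 6 + 2) / 2)) ^ 6 =
        16 * (x + 9) * ((x + 4) * (x + 5) * (x + 6)) / (9 * (x + 7) ^ 5 * (x + 8) ^ 5) := by
      field_simp
      ring
    rw [hA, show x + 6 + 3 = x + 9 by ring, show x + 9 - 2 = x + 7 by ring,
      div_le_div_iff₀ (by positivity) (by positivity)]
    calc 16 * (x + 9) * ((x + 4) * (x + 5) * (x + 6)) * (9 * (x + 7) ^ 10)
        = (144 * (x + 9) * (x + 7) ^ 5) * ((x + 4) * (x + 5) * (x + 6) * (x + 7) ^ 5) := by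
          ring
      _ ≤ (144 * (x + 9) * (x + 7) ^ 5) * ((x + 9) ^ 3 * (x + 8) ^ 5) := by
          apply mul_le_mul_of_nonneg_left key (by positivity)
      _ = 16 * (x + 9) ^ 4 * (9 * (x + 7) ^ 5 * (x + 8) ^ 5) := by ring
  apply mul_le_mul hPref
  · apply pow_le_pow_left₀ (by positivity) hBase
  · positivity
  · positivity
end

section
/- For every fixed integer K ≥ 2, the sequence a_n := C(n, K+1) · (1/C(n−1, K))^{K+1} · (C(n−K−2, K)/C(n−1, K))^{n−K−1}, multiplied by n^{K^2−1}, converges as n → ∞ to (K!)^K · e^{−K(K+1)} / (K+1). -/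
/-!
Since `C(n + c, k) ~ n ^ k / k!` for fixed `c`, the prefactor behaves like
`n ^ (K² - 1) · (n ^ (K + 1) / (K + 1)!) · (K! / n ^ K) ^ (K + 1) = K! ^ K / (K + 1)`.
Writing `n = m + K + 2`, Pascal's rule gives
`C(m + K + 1, K) - C(m, K) = ∑_{i ≤ K} C(m + i, K - 1) ~ (K + 1) m ^ (K - 1) / (K - 1)!`,
so the last ratio is `1 - K (K + 1) / m + o(1 / m)` and its `(m + 1)`-st power tends to
`e ^ (-K (K + 1))`.
-/

open Filter Finset Topology Asymptotics Nat

lemma Nat.choose_add_eq_add_sum_choose (m j k : ℕ) :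
    (m + j).choose (k + 1) = m.choose (k + 1) + ∑ i ∈ range j, (m + i).choose k := by
  induction j with
  | zero => simp
  | succ j ih => rw [← add_assoc, choose_succ_succ', ih, sum_range_succ]; ring

lemma tendsto_natCast_add_div_self (c : ℕ) :
    Tendsto (fun n : ℕ => ((n + c : ℕ) : ℝ) / n) atTop (𝓝 1) := by
  have := tendsto_const_nhds (x := (1 : ℝ)).add (tendsto_const_div_atTop_nhds_zero_nat (c : ℝ))
  rw [add_zero] at this
  refine this.congr' ?_
  filter_upwards [eventually_ne_atTop 0] with n hn
  field_simp
  push_cast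
  ring

lemma tendsto_choose_div_pow (k : ℕ) :
    Tendsto (fun n : ℕ => (n.choose k : ℝ) / n ^ k) atTop (𝓝 (1 / k !)) := by
  refine ((isEquivalent_choose k).div (IsEquivalent.refl (u := fun n : ℕ => (n : ℝ) ^ k)))
    |>.tendsto_nhds_iff.mpr (tendsto_const_nhds.congr' ?_)
  filter_upwards [eventually_ne_atTop 0] with n hn
  simp only [Pi.div_apply]
  field_simp

lemma tendsto_choose_add_div_pow (c k : ℕ) :
    Tendsto (fun n : ℕ => ((n + c).choose k : ℝ) / n ^ k) atTop (𝓝 (1 / k !)) := by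
  have := ((tendsto_choose_div_pow k).comp (tendsto_add_atTop_nat c)).mul
    ((tendsto_natCast_add_div_self c).pow k)
  rw [one_pow, mul_one] at this
  refine this.congr' ?_
  filter_upwards [eventually_ne_atTop 0] with n hn
  have : ((n + c : ℕ) : ℝ) ≠ 0 := by positivity
  simp only [Function.comp_apply, div_pow]
  field_simp

lemma Real.tendsto_one_add_pow_add_exp_of_tendsto {g : ℕ → ℝ} {t : ℝ}
    (hg : Tendsto (fun n ↦ n * g n) atTop (𝓝 t)) (j : ℕ) :
    Tendsto (fun n ↦ (1 + g n) ^ (n + j)) atTop (𝓝 (Real.exp t)) := by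
  have hg0 : Tendsto g atTop (𝓝 0) := by
    have := hg.mul (tendsto_inv_atTop_nhds_zero_nat (𝕜 := ℝ))
    rw [mul_zero] at this
    refine this.congr' ?_
    filter_upwards [eventually_ne_atTop 0] with n hn
    field_simp
  have := (Real.tendsto_one_add_pow_exp_of_tendsto hg).mul
    (((tendsto_const_nhds (x := (1 : ℝ))).add hg0).pow j)
  simpa [pow_add] using this

lemma tendsto_mul_choose_div_choose_add_sub_one (j k : ℕ) :
    Tendsto (fun n : ℕ => n * ((n.choose (k + 1) : ℝ) / (n + j).choose (k + 1) - 1)) atTop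
      (𝓝 (-(j * (k + 1) : ℝ))) := by
  have hsum : Tendsto (fun n : ℕ => (∑ i ∈ range j, ((n + i).choose k : ℝ)) / n ^ k) atTop
      (𝓝 (j / k !)) := by
    simp_rw [sum_div]
    simpa [div_eq_mul_inv] using tendsto_finsetSum (range j) fun i _ => tendsto_choose_add_div_pow i k
  have := (hsum.div (tendsto_choose_add_div_pow j (k + 1)) (by positivity)).neg
  convert this.congr' ?_ using 2
  · field_simp
    push_cast [factorial_succ]
    ring
  filter_upwards [eventually_gt_atTop k] with n hn
  have hC : ((n + j).choose (k + 1) : ℝ) ≠ 0 := by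
    have : 0 < (n + j).choose (k + 1) := choose_pos (by omega)
    positivity
  have hn0 : (n : ℝ) ≠ 0 := cast_ne_zero.mpr (by omega)
  have hsplit : ((n + j).choose (k + 1) : ℝ) =
      n.choose (k + 1) + ∑ i ∈ range j, ((n + i).choose k : ℝ) := by
    rw [choose_add_eq_add_sum_choose]; push_cast; rfl
  simp only [Pi.div_apply]
  field_simp
  rw [hsplit]
  ring

lemma tendsto_pow_mul_choose_mul_inv_choose_pow {K : ℕ} (hK : 1 ≤ K) :
    Tendsto (fun n : ℕ => (n : ℝ) ^ (K ^ 2 - 1) *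
        ((n.choose (K + 1) : ℝ) * (1 / ((n - 1).choose K : ℝ)) ^ (K + 1)))
      atTop (𝓝 ((K ! : ℝ) ^ K / (K + 1))) := by
  rw [← tendsto_add_atTop_iff_nat 1]
  have := (((tendsto_natCast_add_div_self 1).pow (K ^ 2 - 1)).mul
    (tendsto_choose_add_div_pow 1 (K + 1))).div
      ((tendsto_choose_div_pow K).pow (K + 1)) (by positivity)
  convert this.congr' ?_ using 2
  · have : (K ! : ℝ) ≠ 0 := by positivity
    push_cast [factorial_succ]
    simp only [one_pow, one_div, inv_pow]
    field_simp
    ring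
  filter_upwards [eventually_ge_atTop K] with n hn
  have hC : (n.choose K : ℝ) ≠ 0 := cast_ne_zero.mpr (choose_pos hn).ne'
  have hn0 : (n : ℝ) ≠ 0 := cast_ne_zero.mpr (by omega)
  have hexp : K * (K + 1) = K ^ 2 - 1 + (K + 1) := by
    cases K with
    | zero => omega
    | succ k => ring_nf; omega
  simp only [Pi.div_apply, Nat.add_sub_cancel, one_div, inv_pow, div_pow, ← pow_mul]
  field_simp
  rw [hexp, pow_add]
  ring

lemma tendsto_choose_div_choose_pow {K : ℕ} (hK : 1 ≤ K) :
    Tendsto (fun n : ℕ => (((n - K - 2).choose K : ℝ) / ((n - 1).choose K : ℝ)) ^ (n - K - 1))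
      atTop (𝓝 (Real.exp (-(K : ℝ) * ((K : ℝ) + 1)))) := by
  obtain ⟨k, rfl⟩ : ∃ k, K = k + 1 := ⟨K - 1, by omega⟩
  rw [← tendsto_add_atTop_iff_nat (k + 3)]
  have := Real.tendsto_one_add_pow_add_exp_of_tendsto
    (tendsto_mul_choose_div_choose_add_sub_one (k + 2) k) 1
  convert this using 2 with n
  · have h1 : n + (k + 3) - (k + 1) - 2 = n := by omega
    have h2 : n + (k + 3) - 1 = n + (k + 2) := by omega
    have h3 : n + (k + 3) - (k + 1) - 1 = n + 1 := by omega
    rw [h1, h2, h3, add_sub_cancel]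
  · push_cast
    ring_nf

theorem expected_isolated_limit (K : ℕ) (hK : 2 ≤ K) :
    Filter.Tendsto
      (fun n : ℕ =>
        (n : ℝ) ^ (K ^ 2 - 1) *
          ((n.choose (K + 1) : ℝ) * (1 / ((n - 1).choose K : ℝ)) ^ (K + 1) *
            (((n - K - 2).choose K : ℝ) / ((n - 1).choose K : ℝ)) ^ (n - K - 1)))
      Filter.atTop
      (nhds ((Nat.factorial K : ℝ) ^ K * Real.exp (-(K : ℝ) * ((K : ℝ) + 1)) / ((K : ℝ) + 1))) := by
  have hK1 : 1 ≤ K := by omega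
  have := (tendsto_pow_mul_choose_mul_inv_choose_pow hK1).mul (tendsto_choose_div_choose_pow hK1)
  rw [div_mul_eq_mul_div] at this
  simpa only [mul_assoc] using this
end

section
/- For every fixed integer K ≥ 2 and all integers n > 2K+3, one has C(n,K+1)·C(n−K−1,K+1)·(1/C(n−1,K))^{2(K+1)}·(C(n−2K−3,K)/C(n−1,K))^{n−2(K+1)} ≤ ((K!)^{2(K+1)}/((K+1)!)^2) · (n^{2(K+1)}/(n−K)^{2K(K+1)}) · (1 − 2(K+1)/(n−1))^{K(n−2(K+1))}. -/
lemma descFactorial_ratio (K : ℕ) {x y : ℕ} (h : x ≤ y) :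
    x.descFactorial K * y ^ K ≤ y.descFactorial K * x ^ K := by
  induction K with
  | zero => simp
  | succ k ih =>
    rw [Nat.descFactorial_succ, Nat.descFactorial_succ, pow_succ, pow_succ]
    have h1 : (x - k) * y ≤ (y - k) * x := by
      rw [Nat.sub_mul, Nat.sub_mul]
      calc x * y - k * y ≤ x * y - k * x :=
            Nat.sub_le_sub_left (Nat.mul_le_mul_left k h) _
        _ = y * x - k * x := by rw [mul_comm x y]
    calc (x - k) * x.descFactorial k * (y ^ k * y)
        = ((x - k) * y) * (x.descFactorial k * y ^ k) := by ring
      _ ≤ ((y - k) * x) * (y.descFactorial k * x ^ k) := Nat.mul_le_mul h1 ih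
      _ = (y - k) * y.descFactorial k * (x ^ k * x) := by ring

lemma choose_ratio_nat (K : ℕ) {x y : ℕ} (h : x ≤ y) :
    x.choose K * y ^ K ≤ y.choose K * x ^ K := by
  have := descFactorial_ratio K h
  rw [Nat.descFactorial_eq_factorial_mul_choose, Nat.descFactorial_eq_factorial_mul_choose,
    mul_assoc, mul_assoc] at this
  exact Nat.le_of_mul_le_mul_left this (Nat.factorial_pos K)

lemma choose_ratio_real (K : ℕ) {x y : ℕ} (h : x ≤ y) (hy : 0 < y) (hK : K ≤ y) :
    (x.choose K : ℝ) / (y.choose K : ℝ) ≤ ((x : ℝ) / (y : ℝ)) ^ K := by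
  have hc : (0 : ℝ) < (y.choose K : ℝ) := by
    exact_mod_cast Nat.choose_pos hK
  have hyp : (0 : ℝ) < (y : ℝ) ^ K := by positivity
  rw [div_pow, div_le_div_iff₀ hc hyp]
  have := choose_ratio_nat K h
  push_cast
  calc (x.choose K : ℝ) * (y : ℝ) ^ K ≤ (y.choose K : ℝ) * (x : ℝ) ^ K := by
        exact_mod_cast this
    _ = (x : ℝ) ^ K * (y.choose K : ℝ) := by ring

theorem pairs_isolated_upper (K n : ℕ) (hK : 2 ≤ K) (hn : 2 * K + 3 < n) :
    (n.choose (K + 1) : ℝ) * ((n - K - 1).choose (K + 1) : ℝ) *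
        (1 / ((n - 1).choose K : ℝ)) ^ (2 * (K + 1)) *
        (((n - 2 * K - 3).choose K : ℝ) / ((n - 1).choose K : ℝ)) ^ (n - 2 * (K + 1)) ≤
      ((Nat.factorial K : ℝ) ^ (2 * (K + 1)) / (Nat.factorial (K + 1) : ℝ) ^ 2) *
        ((n : ℝ) ^ (2 * (K + 1)) / ((n : ℝ) - K) ^ (2 * K * (K + 1))) *
        (1 - 2 * ((K : ℝ) + 1) / ((n : ℝ) - 1)) ^ (K * (n - 2 * (K + 1))) := by
  have hn4 : 2 * K + 4 ≤ n := hn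
  have hn1 : 1 ≤ n := by omega
  have hKn1 : K ≤ n - 1 := by omega
  -- real casts
  have c1 : ((n - 1 : ℕ) : ℝ) = (n : ℝ) - 1 := by
    push_cast [Nat.cast_sub hn1]; ring
  have cK : ((n - K : ℕ) : ℝ) = (n : ℝ) - K := by
    have : K ≤ n := by omega
    push_cast [Nat.cast_sub this]; ring
  have c3 : ((n - 2 * K - 3 : ℕ) : ℝ) = (n : ℝ) - 2 * K - 3 := by
    have h1 : 2 * K ≤ n := by omega
    have h2 : 3 ≤ n - 2 * K := by omega
    push_cast [Nat.cast_sub h1, Nat.cast_sub h2]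
    ring
  have hnR : (2 * (K : ℝ) + 3) < (n : ℝ) := by exact_mod_cast hn
  have hposn1 : (0 : ℝ) < (n : ℝ) - 1 := by linarith
  have hposnK : (0 : ℝ) < (n : ℝ) - K := by linarith
  have hcpos : (0 : ℝ) < ((n - 1).choose K : ℝ) := by
    exact_mod_cast Nat.choose_pos hKn1
  -- piece 1: n.choose (K+1) ≤ n^(K+1)/(K+1)!
  have h1 : (n.choose (K + 1) : ℝ) ≤ (n : ℝ) ^ (K + 1) / (Nat.factorial (K + 1) : ℝ) := by
    have := Nat.choose_le_pow_div (α := ℝ) (K + 1) n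
    simpa using this
  -- piece 2
  have h2 : (((n - K - 1).choose (K + 1)) : ℝ) ≤ (n : ℝ) ^ (K + 1) / (Nat.factorial (K + 1) : ℝ) := by
    have hm : (n - K - 1).choose (K + 1) ≤ n.choose (K + 1) :=
      Nat.choose_le_choose _ (by omega)
    calc (((n - K - 1).choose (K + 1)) : ℝ) ≤ (n.choose (K + 1) : ℝ) := by exact_mod_cast hm
      _ ≤ _ := h1
  -- piece 3: 1/choose(n-1,K) ≤ K!/(n-K)^K
  have h3 : 1 / ((n - 1).choose K : ℝ) ≤ (Nat.factorial K : ℝ) / ((n : ℝ) - K) ^ K := by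
    have key : (n - K) ^ K ≤ (n - 1).descFactorial K := by
      have := Nat.pow_sub_le_descFactorial (n - 1) K
      have e : n - 1 + 1 - K = n - K := by omega
      rwa [e] at this
    rw [Nat.descFactorial_eq_factorial_mul_choose] at key
    have keyR : ((n : ℝ) - K) ^ K ≤ (Nat.factorial K : ℝ) * ((n - 1).choose K : ℝ) := by
      rw [← cK]
      exact_mod_cast key
    rw [div_le_div_iff₀ hcpos (by positivity)]
    linarith [keyR]
  -- piece 4: ratio
  have h4 : ((n - 2 * K - 3).choose K : ℝ) / ((n - 1).choose K : ℝ) ≤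
      (1 - 2 * ((K : ℝ) + 1) / ((n : ℝ) - 1)) ^ K := by
    have hle : n - 2 * K - 3 ≤ n - 1 := by omega
    have := choose_ratio_real K hle (by omega) hKn1
    have ebase : ((n - 2 * K - 3 : ℕ) : ℝ) / ((n - 1 : ℕ) : ℝ)
        = 1 - 2 * ((K : ℝ) + 1) / ((n : ℝ) - 1) := by
      rw [c3, c1]
      field_simp
      ring
    rwa [ebase] at this
  have hbase_nonneg : (0 : ℝ) ≤ 1 - 2 * ((K : ℝ) + 1) / ((n : ℝ) - 1) := by
    rw [sub_nonneg, div_le_one hposn1]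
    linarith
  have step : (n.choose (K + 1) : ℝ) * ((n - K - 1).choose (K + 1) : ℝ) *
        (1 / ((n - 1).choose K : ℝ)) ^ (2 * (K + 1)) *
        (((n - 2 * K - 3).choose K : ℝ) / ((n - 1).choose K : ℝ)) ^ (n - 2 * (K + 1)) ≤
      ((n : ℝ) ^ (K + 1) / (Nat.factorial (K + 1) : ℝ)) *
        ((n : ℝ) ^ (K + 1) / (Nat.factorial (K + 1) : ℝ)) *
        ((Nat.factorial K : ℝ) / ((n : ℝ) - K) ^ K) ^ (2 * (K + 1)) *
        ((1 - 2 * ((K : ℝ) + 1) / ((n : ℝ) - 1)) ^ K) ^ (n - 2 * (K + 1)) := by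
    gcongr <;> positivity
  refine step.trans (le_of_eq ?_)
  rw [← pow_mul]
  rw [div_pow]
  have e1 : ((Nat.factorial K : ℝ)) ^ (2 * (K + 1)) / (((n : ℝ) - K) ^ K) ^ (2 * (K + 1))
      = (Nat.factorial K : ℝ) ^ (2 * (K + 1)) / ((n : ℝ) - K) ^ (2 * K * (K + 1)) := by
    rw [← pow_mul]
    ring_nf
  rw [e1]
  have hfact : (0 : ℝ) < (Nat.factorial (K + 1) : ℝ) := by positivity
  have e2 : (2 : ℕ) * (K + 1) = (K + 1) + (K + 1) := by ring
  rw [e2, pow_add]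
  field_simp
  ring
end

section
/- Fix an integer K ≥ 2 and an integer n with e(K+2) < n. For all integers r with K+1 ≤ r ≤ ⌊n/2⌋, one has C(n,r)·(C(r−1,K)/C(n−1,K))^r·(C(n−r−1,K)/C(n−1,K))^{n−r} ≤ (√n/(√(2π)·√(n−r)·√r)) · (r/n)^{r(K−1)} · e^{−(r/n)(n−r)(K−1)}. -/
open Real Filter

lemma descFac_ratio (a b k : ℕ) (hab : a ≤ b) :
    a.descFactorial k * b ^ k ≤ b.descFactorial k * a ^ k := by
  rw [Nat.descFactorial_eq_prod_range, Nat.descFactorial_eq_prod_range]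
  calc (∏ i ∈ Finset.range k, (a - i)) * b ^ k = ∏ i ∈ Finset.range k, (a - i) * b := by
        rw [Finset.prod_mul_distrib, Finset.prod_const, Finset.card_range]
    _ ≤ ∏ i ∈ Finset.range k, (b - i) * a := by
        apply Finset.prod_le_prod'
        intro i _
        rcases le_or_gt i a with h | h
        · calc (a - i) * b = a * b - i * b := by rw [Nat.sub_mul]
            _ ≤ b * a - i * a := by
                rw [mul_comm a b]; exact Nat.sub_le_sub_left (Nat.mul_le_mul_left i hab) _
            _ = (b - i) * a := by rw [Nat.sub_mul]
        · simp [Nat.sub_eq_zero_of_le h.le]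
    _ = (∏ i ∈ Finset.range k, (b - i)) * a ^ k := by
        rw [Finset.prod_mul_distrib, Finset.prod_const, Finset.card_range]

lemma choose_ratio (a b k : ℕ) (hab : a ≤ b) (hb : 0 < b) :
    ((a.choose k : ℝ)) / (b.choose k : ℝ) ≤ ((a:ℝ)/b)^k := by
  rcases le_or_gt k b with hkb | hkb
  · have h0 : a.choose k * b ^ k ≤ b.choose k * a ^ k := by
      have h := descFac_ratio a b k hab
      rw [Nat.descFactorial_eq_factorial_mul_choose, Nat.descFactorial_eq_factorial_mul_choose,
        mul_assoc, mul_assoc] at h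
      exact Nat.le_of_mul_le_mul_left h k.factorial_pos
    have h1 : (a.choose k : ℝ) * (b:ℝ)^k ≤ (b.choose k : ℝ) * (a:ℝ)^k := by exact_mod_cast h0
    have hc : (0:ℝ) < (b.choose k : ℝ) := by exact_mod_cast Nat.choose_pos hkb
    rw [div_le_iff₀ hc, div_pow, div_mul_eq_mul_div, le_div_iff₀ (by positivity)]
    linarith
  · rw [Nat.choose_eq_zero_of_lt hkb, Nat.cast_zero, div_zero]
    exact pow_nonneg (div_nonneg (Nat.cast_nonneg a) (Nat.cast_nonneg b)) k

lemma stir_lower (n : ℕ) (h : n ≠ 0) : √π ≤ Stirling.stirlingSeq n := by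
  obtain ⟨m, rfl⟩ := Nat.exists_eq_succ_of_ne_zero h
  exact Stirling.stirlingSeq'_antitone.le_of_tendsto
    (Stirling.tendsto_stirlingSeq_sqrt_pi.comp (tendsto_add_atTop_nat 1)) m

lemma stir_anti {a b : ℕ} (ha : 0 < a) (h : a ≤ b) :
    Stirling.stirlingSeq b ≤ Stirling.stirlingSeq a := by
  obtain ⟨a', rfl⟩ := Nat.exists_eq_succ_of_ne_zero ha.ne'
  obtain ⟨b', rfl⟩ := Nat.exists_eq_succ_of_ne_zero (by omega : b ≠ 0)
  exact Stirling.stirlingSeq'_antitone (by omega : a' ≤ b')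

lemma stir_pos (n : ℕ) (h : n ≠ 0) : 0 < Stirling.stirlingSeq n := by
  obtain ⟨m, rfl⟩ := Nat.exists_eq_succ_of_ne_zero h
  exact Stirling.stirlingSeq'_pos m

lemma factorial_eq (n : ℕ) (h : n ≠ 0) :
    (n.factorial : ℝ) = Stirling.stirlingSeq n * (√(2*n) * ((n:ℝ)/exp 1)^n) := by
  have hn : (0:ℝ) < n := by exact_mod_cast Nat.pos_of_ne_zero h
  have hd : √(2*(n:ℝ)) * ((n:ℝ)/exp 1)^n ≠ 0 := by positivity
  rw [Stirling.stirlingSeq, div_mul_cancel₀ _ hd]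

lemma choose_le_stirling (n r : ℕ) (h1 : 0 < r) (h2 : r < n) :
    (n.choose r : ℝ) ≤ √(n:ℝ) / (√(2*π) * √((n:ℝ) - r) * √r) *
      (((n:ℝ)/((n:ℝ)-r))^(n-r) * ((n:ℝ)/r)^r) := by
  have hnr : ((n - r : ℕ):ℝ) = (n:ℝ) - r := by
    push_cast [Nat.cast_sub h2.le]; ring
  have hrpos : (0:ℝ) < r := by exact_mod_cast h1
  have hnpos : (0:ℝ) < n := by exact_mod_cast Nat.pos_of_ne_zero (by omega)
  have hq : (0:ℝ) < (n:ℝ) - r := by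
    have : (r:ℝ) < n := by exact_mod_cast h2
    linarith
  have he : (0:ℝ) < exp 1 := exp_pos 1
  set s := Stirling.stirlingSeq with hs
  have hsr : 0 < s r := stir_pos r h1.ne'
  have hsq : √π ≤ s (n - r) := stir_lower (n - r) (by omega)
  have hsn : s n ≤ s r := stir_anti h1 h2.le
  have hpi : (0:ℝ) < √π := sqrt_pos.mpr pi_pos
  rw [Nat.cast_choose ℝ h2.le, factorial_eq n (by omega), factorial_eq r h1.ne',
    factorial_eq (n - r) (by omega), hnr]
  set A := √(2*(n:ℝ)) * ((n:ℝ)/exp 1)^n with hA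
  set B := √(2*(r:ℝ)) * ((r:ℝ)/exp 1)^r with hB
  set C := √(2*((n:ℝ)-r)) * (((n:ℝ)-r)/exp 1)^(n-r) with hC
  have hApos : 0 < A := by rw [hA]; positivity
  have hBpos : 0 < B := by rw [hB]; positivity
  have hCpos : 0 < C := by rw [hC]; positivity
  calc s n * A / (s r * B * (s (n-r) * C))
      ≤ s r * A / (s r * B * (√π * C)) := by
        apply div_le_div₀ (by positivity) (mul_le_mul_of_nonneg_right hsn hApos.le)
          (by positivity)
        exact mul_le_mul_of_nonneg_left (mul_le_mul_of_nonneg_right hsq hCpos.le)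
          (by positivity)
    _ = √(n:ℝ) / (√(2*π) * √((n:ℝ) - r) * √r) * (((n:ℝ)/((n:ℝ)-r))^(n-r) * ((n:ℝ)/r)^r) := by
        have hsplit : ((n:ℝ)/exp 1)^n = ((n:ℝ)/exp 1)^r * ((n:ℝ)/exp 1)^(n-r) := by
          rw [← pow_add]; congr 1; omega
        rw [hA, hB, hC, hsplit]
        rw [show (2*(n:ℝ)) = 2*(n:ℝ) from rfl]
        rw [sqrt_mul (by norm_num : (0:ℝ) ≤ 2), sqrt_mul (by norm_num : (0:ℝ) ≤ 2),
          sqrt_mul (by norm_num : (0:ℝ) ≤ 2), sqrt_mul (by norm_num : (0:ℝ) ≤ 2)]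
        rw [div_pow, div_pow, div_pow, div_pow, div_pow, div_pow]
        have h2s : (0:ℝ) < √2 := by positivity
        have hsn' : (0:ℝ) < √(n:ℝ) := by positivity
        have hsr' : (0:ℝ) < √(r:ℝ) := by positivity
        have hsq' : (0:ℝ) < √((n:ℝ)-r) := by positivity
        field_simp

theorem isolated_set_prob_bound (K n r : ℕ) (hK : 2 ≤ K)
    (hn : Real.exp 1 * (K + 2) < n) (hr1 : K + 1 ≤ r) (hr2 : r ≤ n / 2) :
    (n.choose r : ℝ) * (((r - 1).choose K : ℝ) / ((n - 1).choose K : ℝ)) ^ r *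
        (((n - r - 1).choose K : ℝ) / ((n - 1).choose K : ℝ)) ^ (n - r) ≤
      (Real.sqrt n / (Real.sqrt (2 * π) * Real.sqrt ((n : ℝ) - r) * Real.sqrt r)) *
        ((r : ℝ) / n) ^ (r * (K - 1)) *
        Real.exp (-((r : ℝ) / n) * ((n : ℝ) - r) * ((K : ℝ) - 1)) := by
  have h2e : (2:ℝ) < Real.exp 1 := by
    have := Real.exp_one_gt_d9; linarith
  have hnK : 2*K + 4 < n := by
    have h1 : (2:ℝ) * (K + 2) < n := by nlinarith [Nat.cast_nonneg (α := ℝ) K]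
    exact_mod_cast (by push_cast; linarith : ((2*K+4 : ℕ):ℝ) < (n:ℕ))
  have hrn : r < n := by omega
  have hrnR : (r:ℝ) < n := by exact_mod_cast hrn
  have hrpos : (0:ℝ) < r := by exact_mod_cast (by omega : 0 < r)
  have hnpos : (0:ℝ) < n := by exact_mod_cast (by omega : 0 < n)
  have hn9 : (9:ℝ) ≤ n := by exact_mod_cast (by omega : 9 ≤ n)
  have hq : (0:ℝ) < (n:ℝ) - r := by linarith
  -- bound 1
  have b1 := choose_le_stirling n r (by omega) hrn
  -- bound 2
  have b2 : ((r-1).choose K : ℝ) / ((n-1).choose K : ℝ) ≤ ((r:ℝ)/n)^K := by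
    refine le_trans (choose_ratio (r-1) (n-1) K (by omega) (by omega)) ?_
    apply pow_le_pow_left₀ (by positivity)
    rw [Nat.cast_sub (by omega : 1 ≤ r), Nat.cast_sub (by omega : 1 ≤ n),
      div_le_div_iff₀ (by push_cast; linarith) hnpos]
    push_cast; nlinarith
  -- bound 3
  have b3 : ((n-r-1).choose K : ℝ) / ((n-1).choose K : ℝ) ≤ (((n:ℝ)-r)/n)^K := by
    refine le_trans (choose_ratio (n-r-1) (n-1) K (by omega) (by omega)) ?_
    apply pow_le_pow_left₀ (by positivity)
    rw [show n - r - 1 = n - (r+1) from by omega, Nat.cast_sub (by omega : r+1 ≤ n),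
      Nat.cast_sub (by omega : 1 ≤ n), div_le_div_iff₀ (by push_cast; linarith) hnpos]
    push_cast; nlinarith
  -- combine
  have step1 : (n.choose r : ℝ) * (((r - 1).choose K : ℝ) / ((n - 1).choose K : ℝ)) ^ r *
        (((n - r - 1).choose K : ℝ) / ((n - 1).choose K : ℝ)) ^ (n - r) ≤
      (√(n:ℝ) / (√(2*π) * √((n:ℝ) - r) * √r) *
        (((n:ℝ)/((n:ℝ)-r))^(n-r) * ((n:ℝ)/r)^r)) * (((r:ℝ)/n)^K)^r *
        ((((n:ℝ)-r)/n)^K)^(n-r) := by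
    gcongr <;> positivity
  refine step1.trans ?_
  -- algebra
  have hx : ((r:ℝ)/n)^(K*r) = ((r:ℝ)/n)^(r*(K-1)) * ((r:ℝ)/n)^r := by
    rw [← pow_add]; congr 1
    have h1 : K - 1 + 1 = K := by omega
    calc K * r = r * ((K-1) + 1) := by rw [h1]; ring
      _ = r * (K-1) + r := by ring
  have hy : (((n:ℝ)-r)/n)^(K*(n-r)) = (((n:ℝ)-r)/n)^((n-r)*(K-1)) * (((n:ℝ)-r)/n)^(n-r) := by
    rw [← pow_add]; congr 1
    have h1 : K - 1 + 1 = K := by omega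
    calc K * (n-r) = (n-r) * ((K-1) + 1) := by rw [h1]; ring
      _ = (n-r) * (K-1) + (n-r) := by ring
  have c1 : ((n:ℝ)/r)^r * ((r:ℝ)/n)^r = 1 := by
    rw [← mul_pow, div_mul_div_comm, mul_comm, div_self (by positivity), one_pow]
  have c2 : ((n:ℝ)/((n:ℝ)-r))^(n-r) * (((n:ℝ)-r)/n)^(n-r) = 1 := by
    rw [← mul_pow, div_mul_div_comm, mul_comm, div_self (by positivity), one_pow]
  have step2 : (√(n:ℝ) / (√(2*π) * √((n:ℝ) - r) * √r) *
        (((n:ℝ)/((n:ℝ)-r))^(n-r) * ((n:ℝ)/r)^r)) * (((r:ℝ)/n)^K)^r *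
        ((((n:ℝ)-r)/n)^K)^(n-r)
      = √(n:ℝ) / (√(2*π) * √((n:ℝ) - r) * √r) * ((r:ℝ)/n)^(r*(K-1)) *
        (((n:ℝ)-r)/n)^((n-r)*(K-1)) := by
    rw [← pow_mul, ← pow_mul, hx, hy]
    calc √(n:ℝ) / (√(2*π) * √((n:ℝ) - r) * √r) *
          (((n:ℝ)/((n:ℝ)-r))^(n-r) * ((n:ℝ)/r)^r) *
          (((r:ℝ)/n)^(r*(K-1)) * ((r:ℝ)/n)^r) *
          ((((n:ℝ)-r)/n)^((n-r)*(K-1)) * (((n:ℝ)-r)/n)^(n-r))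
        = √(n:ℝ) / (√(2*π) * √((n:ℝ) - r) * √r) * ((r:ℝ)/n)^(r*(K-1)) *
          (((n:ℝ)-r)/n)^((n-r)*(K-1)) *
          ((((n:ℝ)/r)^r * ((r:ℝ)/n)^r) * (((n:ℝ)/((n:ℝ)-r))^(n-r) * (((n:ℝ)-r)/n)^(n-r))) := by
          ring
      _ = _ := by rw [c1, c2]; ring
  rw [step2]
  -- last: ((n-r)/n)^((n-r)*(K-1)) ≤ exp(-(r/n)*(n-r)*(K-1))
  have last : (((n:ℝ)-r)/n)^((n-r)*(K-1)) ≤ Real.exp (-((r:ℝ)/n) * ((n:ℝ)-r) * ((K:ℝ)-1)) := by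
    have h1 : ((n:ℝ)-r)/n ≤ Real.exp (-((r:ℝ)/n)) := by
      have := Real.add_one_le_exp (-((r:ℝ)/n))
      have h2 : ((n:ℝ)-r)/n = -((r:ℝ)/n) + 1 := by field_simp; ring
      linarith
    calc (((n:ℝ)-r)/n)^((n-r)*(K-1)) ≤ (Real.exp (-((r:ℝ)/n)))^((n-r)*(K-1)) :=
          pow_le_pow_left₀ (by positivity) h1 _
      _ = Real.exp (-((r:ℝ)/n) * (((n-r)*(K-1) : ℕ) : ℝ)) := by
          rw [← Real.exp_nat_mul]; ring_nf
      _ = Real.exp (-((r:ℝ)/n) * ((n:ℝ)-r) * ((K:ℝ)-1)) := by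
          congr 1
          push_cast [Nat.cast_sub hrn.le, Nat.cast_sub (by omega : 1 ≤ K)]
          ring
  calc √(n:ℝ) / (√(2*π) * √((n:ℝ) - r) * √r) * ((r:ℝ)/n)^(r*(K-1)) *
        (((n:ℝ)-r)/n)^((n-r)*(K-1))
      ≤ √(n:ℝ) / (√(2*π) * √((n:ℝ) - r) * √r) * ((r:ℝ)/n)^(r*(K-1)) *
        Real.exp (-((r:ℝ)/n) * ((n:ℝ)-r) * ((K:ℝ)-1)) := by
        apply mul_le_mul_of_nonneg_left last (by positivity)
end

section
/- Fix an integer K ≥ 2 and an integer n ≥ 4(K+2). Then ∑_{r=K+1}^{⌊n/2⌋} (√n/(√(2π)·√(n−r)·√r)) · (r/n)^{r(K−1)} · e^{−((K+1)/n)(n−K−1)(K−1)} ≤ c(n;K)·[((K+1)/n)^{K^2−1} + (n/2)·((K+2)/n)^{(K+2)(K−1)}], where c(n;K) = (e^{−(K^2−1)(1−(K+1)/n)}/√(2π(K+1)))·√(n/(n−K−1)). -/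
/-!
Bound the prefactor by its value at `r = K + 1`, using `r (n - r) ≥ (K + 1)(n - K - 1)` on
`K + 1 ≤ r ≤ n / 2`. In the remaining sum keep the first term and bound each later one by the
term at `r = K + 2`: writing `(r / n) ^ r = exp (n · x log x)` with `x = r / n`, convexity of
`x log x` puts its maximum on `[(K + 2) / n, 1 / 2]` at an endpoint, and the left endpoint wins
because `(K + 2) / n ≤ 1 / 4` and `x log x` takes the same value at `1 / 4` and `1 / 2`.
-/

open Real Finset

lemma half_mul_log_half_le_mul_log {a : ℝ} (ha : 0 < a) (ha4 : a ≤ 1 / 4) :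
    1 / 2 * log (1 / 2) ≤ a * log a := by
  have he4 : exp 1 ≤ 4 := by linarith [exp_one_lt_d9]
  have h4a : (4 : ℝ) ≤ 1 / a := by rw [le_div_iff₀ ha]; linarith
  have hanti : log (1 / a) / (1 / a) ≤ log 4 / 4 :=
    log_div_self_antitoneOn (by simpa using he4) (by simp only [Set.mem_Ici]; linarith) h4a
  have hleft : log (1 / a) / (1 / a) = -(a * log a) := by
    rw [one_div, log_inv]; field_simp
  have hright : log 4 / 4 = -(1 / 2 * log (1 / 2)) := by
    rw [one_div, log_inv, show (4 : ℝ) = 2 ^ 2 by norm_num, log_pow]; push_cast; ring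
  linarith

lemma mul_log_le_mul_log_of_le_half {a x : ℝ} (ha : 0 < a) (ha4 : a ≤ 1 / 4) (hax : a ≤ x)
    (hx : x ≤ 1 / 2) : x * log x ≤ a * log a := by
  have hseg : x ∈ segment ℝ a (1 / 2) := by
    rw [segment_eq_Icc (by linarith)]; exact ⟨hax, hx⟩
  calc x * log x ≤ max (a * log a) (1 / 2 * log (1 / 2)) :=
        convexOn_mul_log.le_on_segment (Set.mem_Ici.2 ha.le) (by norm_num) hseg
    _ = a * log a := max_eq_left (half_mul_log_half_le_mul_log ha ha4)

lemma div_pow_self_le_div_pow_self {m r n : ℕ} (hm : 0 < m) (hmr : m ≤ r) (hr : 2 * r ≤ n)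
    (hm4 : 4 * m ≤ n) : ((r : ℝ) / n) ^ r ≤ ((m : ℝ) / n) ^ m := by
  have hn : (0 : ℝ) < n := by exact_mod_cast (by omega : 0 < n)
  have hm' : (0 : ℝ) < m := by exact_mod_cast hm
  have hr0 : (0 : ℝ) < r := by exact_mod_cast (by omega : 0 < r)
  have hmr' : (m : ℝ) ≤ r := by exact_mod_cast hmr
  have hr' : 2 * (r : ℝ) ≤ n := by exact_mod_cast hr
  have hm4' : 4 * (m : ℝ) ≤ n := by exact_mod_cast hm4
  have hxlogx : (r / n : ℝ) * log (r / n) ≤ (m / n) * log (m / n) :=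
    mul_log_le_mul_log_of_le_half (by positivity) (by rw [div_le_iff₀ hn]; linarith)
      (by gcongr) (by rw [div_le_iff₀ hn]; linarith)
  rw [← log_le_log_iff (by positivity) (by positivity), log_pow, log_pow]
  calc (r : ℝ) * log (r / n) = n * ((r / n) * log (r / n)) := by field_simp
    _ ≤ n * ((m / n) * log (m / n)) := by gcongr
    _ = m * log (m / n) := by field_simp

lemma sum_Icc_div_pow_le {m n : ℕ} (j : ℕ) (hn : 4 * (m + 1) ≤ n) :
    ∑ r ∈ Icc m (n / 2), ((r : ℝ) / n) ^ (r * j) ≤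
      ((m : ℝ) / n) ^ (m * j) + (n / 2 : ℝ) * (((m : ℝ) + 1) / n) ^ ((m + 1) * j) := by
  rw [← insert_Icc_add_one_left_eq_Icc (by omega), sum_insert (by simp)]
  refine add_le_add le_rfl ?_
  calc ∑ r ∈ Icc (m + 1) (n / 2), ((r : ℝ) / n) ^ (r * j)
      ≤ #(Icc (m + 1) (n / 2)) • (((m : ℝ) + 1) / n) ^ ((m + 1) * j) := by
        refine sum_le_card_nsmul _ _ _ fun r hr => ?_
        rw [mem_Icc] at hr
        rw [pow_mul, pow_mul]
        have := div_pow_self_le_div_pow_self (m := m + 1) (n := n) (by omega) hr.1 (by omega) hn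
        push_cast at this
        gcongr
    _ ≤ (n / 2 : ℝ) * (((m : ℝ) + 1) / n) ^ ((m + 1) * j) := by
        rw [nsmul_eq_mul]
        gcongr
        calc (#(Icc (m + 1) (n / 2)) : ℝ) ≤ ((n / 2 : ℕ) : ℝ) := by
              exact_mod_cast (by rw [Nat.card_Icc]; omega)
          _ ≤ n / 2 := Nat.cast_div_le

lemma mul_sub_le_mul_sub {R : Type*} [CommRing R] [LinearOrder R] [IsStrictOrderedRing R]
    {k r n : R} (hkr : k ≤ r) (hrn : r ≤ n - k) : k * (n - k) ≤ r * (n - r) := by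
  nlinarith

lemma sqrt_div_sqrt_mul_le {c k r n : ℝ} (hc : 0 < c) (hk : 0 < k) (hkr : k ≤ r)
    (hrn : r ≤ n - k) :
    √n / (√c * √(n - r) * √r) ≤ 1 / √(c * k) * √(n / (n - k)) := by
  have hnk : 0 < n - k := by linarith
  have hden : √c * √k * √(n - k) ≤ √c * √(n - r) * √r := by
    rw [mul_assoc, mul_assoc, ← sqrt_mul hk.le, ← sqrt_mul (by linarith : 0 ≤ n - r)]
    gcongr √c * √?_
    linarith [mul_sub_le_mul_sub hkr hrn]
  calc √n / (√c * √(n - r) * √r) ≤ √n / (√c * √k * √(n - k)) := by gcongr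
    _ = 1 / √(c * k) * √(n / (n - k)) := by
        rw [sqrt_mul hc.le, sqrt_div' _ hnk.le]; ring

theorem final_sum_bound_general (K n : ℕ) (hn : 4 * (K + 2) ≤ n) :
    ∑ r ∈ Finset.Icc (K + 1) (n / 2),
        (Real.sqrt n / (Real.sqrt (2 * π) * Real.sqrt ((n : ℝ) - r) * Real.sqrt r)) *
          ((r : ℝ) / n) ^ (r * (K - 1)) *
          Real.exp (-(((K : ℝ) + 1) / n) * ((n : ℝ) - K - 1) * ((K : ℝ) - 1)) ≤
      (Real.exp (-(((K : ℝ) ^ 2 - 1) * (1 - ((K : ℝ) + 1) / n))) /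
          Real.sqrt (2 * π * ((K : ℝ) + 1)) * Real.sqrt ((n : ℝ) / ((n : ℝ) - K - 1))) *
        ((((K : ℝ) + 1) / n) ^ (K ^ 2 - 1) +
          ((n : ℝ) / 2) * (((K : ℝ) + 2) / n) ^ ((K + 2) * (K - 1))) := by
  have hn0 : (n : ℝ) ≠ 0 := by exact_mod_cast (by omega : n ≠ 0)
  rw [show -(((K : ℝ) + 1) / n) * ((n : ℝ) - K - 1) * ((K : ℝ) - 1) =
      -(((K : ℝ) ^ 2 - 1) * (1 - ((K : ℝ) + 1) / n)) by field_simp; ring]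
  have hsum := sum_Icc_div_pow_le (m := K + 1) (K - 1) (by omega)
  rw [← Nat.sq_sub_sq K 1, one_pow] at hsum
  push_cast at hsum
  simp only [add_assoc, one_add_one_eq_two] at hsum
  set P := 1 / √(2 * π * ((K : ℝ) + 1)) * √(n / ((n : ℝ) - K - 1)) with hP
  set E := exp (-(((K : ℝ) ^ 2 - 1) * (1 - ((K : ℝ) + 1) / n)))
  have hPE : 0 ≤ P * E := by positivity
  calc _ ≤ ∑ r ∈ Icc (K + 1) (n / 2), P * ((r : ℝ) / n) ^ (r * (K - 1)) * E := by
        gcongr with r hr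
        have hr := mem_Icc.1 hr
        have hKr : (K : ℝ) + 1 ≤ r := by exact_mod_cast hr.1
        have hrn : 2 * (r : ℝ) ≤ n := by exact_mod_cast (by omega : 2 * r ≤ n)
        rw [hP, show (n : ℝ) - K - 1 = n - (K + 1) by ring]
        exact sqrt_div_sqrt_mul_le (by positivity) (by positivity) hKr (by linarith)
    _ = P * E * ∑ r ∈ Icc (K + 1) (n / 2), ((r : ℝ) / n) ^ (r * (K - 1)) := by
        rw [mul_sum]; exact sum_congr rfl fun r _ => by ring
    _ ≤ P * E * ((((K : ℝ) + 1) / n) ^ (K ^ 2 - 1) +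
          ((n : ℝ) / 2) * (((K : ℝ) + 2) / n) ^ ((K + 2) * (K - 1))) :=
        mul_le_mul_of_nonneg_left hsum hPE
    _ = _ := by ring

theorem final_sum_bound (K n : ℕ) (hK : 2 ≤ K) (hn : 4 * (K + 2) ≤ n) :
    ∑ r ∈ Finset.Icc (K + 1) (n / 2),
        (Real.sqrt n / (Real.sqrt (2 * π) * Real.sqrt ((n : ℝ) - r) * Real.sqrt r)) *
          ((r : ℝ) / n) ^ (r * (K - 1)) *
          Real.exp (-(((K : ℝ) + 1) / n) * ((n : ℝ) - K - 1) * ((K : ℝ) - 1)) ≤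
      (Real.exp (-(((K : ℝ) ^ 2 - 1) * (1 - ((K : ℝ) + 1) / n))) /
          Real.sqrt (2 * π * ((K : ℝ) + 1)) * Real.sqrt ((n : ℝ) / ((n : ℝ) - K - 1))) *
        ((((K : ℝ) + 1) / n) ^ (K ^ 2 - 1) +
          ((n : ℝ) / 2) * (((K : ℝ) + 2) / n) ^ ((K + 2) * (K - 1))) :=
  final_sum_bound_general K n hn
end
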